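/- arXiv:2310.08241 — 3 statements merged into one kernel-verified Lean document; each statement's English description precedes it below -/
import Mathlib

section
/- Let γ₁, γ₂ > 1, π₁, π₂ ≥ 0, and E be real numbers such that L₁(0) > 0 and L₁(1) > 0. Then for every ξ ∈ [0,1], one has 0 ≤ N(ξ)·ξ ≤ D(ξ), where N(ξ) = γ₂L₁(ξ) + γ₂π₂L₂(ξ). In particular, the quantity N(ξ)·ξ/D(ξ) (the discrete analogue of α₁K in the Crank–Nicolson update of the volume fraction) lies in [0,1]. The proof uses the identity D(ξ) − N(ξ)·ξ = (1−ξ)(γ₁L₁(ξ) + γ₁π₁L₂(ξ)). -/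
/-- `L₁(ξ) = (γ₁−1)(γ₂−1)E − γ₁π₁(γ₂−1)ξ − γ₂π₂(γ₁−1)(1−ξ)`. -/
noncomputable def L₁ (γ₁ γ₂ π₁ π₂ E ξ : ℝ) : ℝ :=
  (γ₁ - 1) * (γ₂ - 1) * E - γ₁ * π₁ * (γ₂ - 1) * ξ - γ₂ * π₂ * (γ₁ - 1) * (1 - ξ)

/-- `L₂(ξ) = (γ₂−γ₁)ξ + γ₁ − 1`. -/
noncomputable def L₂ (γ₁ γ₂ ξ : ℝ) : ℝ := (γ₂ - γ₁) * ξ + γ₁ - 1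

/-- `D(ξ) = ((γ₂−γ₁)ξ+γ₁)L₁(ξ) + ((γ₂π₂−γ₁π₁)ξ+γ₁π₁)L₂(ξ)`. -/
noncomputable def Dden (γ₁ γ₂ π₁ π₂ E ξ : ℝ) : ℝ :=
  ((γ₂ - γ₁) * ξ + γ₁) * L₁ γ₁ γ₂ π₁ π₂ E ξ
    + ((γ₂ * π₂ - γ₁ * π₁) * ξ + γ₁ * π₁) * L₂ γ₁ γ₂ ξ

/-- `N(ξ) = γ₂L₁(ξ) + γ₂π₂L₂(ξ)`. -/
noncomputable def Nnum (γ₁ γ₂ π₁ π₂ E ξ : ℝ) : ℝ :=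
  γ₂ * L₁ γ₁ γ₂ π₁ π₂ E ξ + γ₂ * π₂ * L₂ γ₁ γ₂ ξ

/-- `f(ξ;α̃) = ξ − α̃ − θ·N(ξ)·ξ/D(ξ)`. -/
noncomputable def fCN (γ₁ γ₂ π₁ π₂ E θ α' ξ : ℝ) : ℝ :=
  ξ - α' - θ * (Nnum γ₁ γ₂ π₁ π₂ E ξ) * ξ / (Dden γ₁ γ₂ π₁ π₂ E ξ)

/-- `0 ≤ N(ξ)·ξ ≤ D(ξ)` on `[0,1]`, hence `N(ξ)·ξ/D(ξ) ∈ [0,1]`, via the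
identity `D(ξ) − N(ξ)·ξ = (1−ξ)(γ₁L₁(ξ) + γ₁π₁L₂(ξ))`. -/
theorem stmt_4 (γ₁ γ₂ π₁ π₂ E : ℝ) (hγ₁ : 1 < γ₁) (hγ₂ : 1 < γ₂)
    (hπ₁ : 0 ≤ π₁) (hπ₂ : 0 ≤ π₂)
    (h0 : 0 < L₁ γ₁ γ₂ π₁ π₂ E 0) (h1 : 0 < L₁ γ₁ γ₂ π₁ π₂ E 1) :
    ∀ ξ ∈ Set.Icc (0 : ℝ) 1,
      (0 ≤ Nnum γ₁ γ₂ π₁ π₂ E ξ * ξ ∧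
        Nnum γ₁ γ₂ π₁ π₂ E ξ * ξ ≤ Dden γ₁ γ₂ π₁ π₂ E ξ) ∧
      Nnum γ₁ γ₂ π₁ π₂ E ξ * ξ / Dden γ₁ γ₂ π₁ π₂ E ξ ∈ Set.Icc (0 : ℝ) 1 := by
  intro ξ hξ
  obtain ⟨hξ0, hξ1⟩ := hξ
  simp only [L₁] at h0 h1
  norm_num at h0 h1
  have hγ₁0 : (0:ℝ) < γ₁ := by linarith
  have hγ₂0 : (0:ℝ) < γ₂ := by linarith
  have hA : 0 < (γ₁ - 1) * (γ₂ - 1) * E - γ₂ * π₂ * (γ₁ - 1) := by linarith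
  have hB : 0 < (γ₁ - 1) * (γ₂ - 1) * E - γ₁ * π₁ * (γ₂ - 1) := by linarith
  have hL1 : 0 < L₁ γ₁ γ₂ π₁ π₂ E ξ := by
    have heq : L₁ γ₁ γ₂ π₁ π₂ E ξ
        = (1 - ξ) * ((γ₁ - 1) * (γ₂ - 1) * E - γ₂ * π₂ * (γ₁ - 1))
        + ξ * ((γ₁ - 1) * (γ₂ - 1) * E - γ₁ * π₁ * (γ₂ - 1)) := by
      simp only [L₁]; ring
    rw [heq]
    rcases lt_or_eq_of_le hξ1 with h | h
    · have h1' := mul_pos (by linarith : (0:ℝ) < 1 - ξ) hA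
      have h2' := mul_nonneg hξ0 hB.le
      linarith
    · subst h
      have h2' := mul_pos (by norm_num : (0:ℝ) < (1:ℝ)) hB
      linarith
  have hL2 : 0 ≤ L₂ γ₁ γ₂ ξ := by
    have : L₂ γ₁ γ₂ ξ = (γ₂ - 1) * ξ + (γ₁ - 1) * (1 - ξ) := by simp only [L₂]; ring
    rw [this]
    nlinarith
  have hN : 0 ≤ Nnum γ₁ γ₂ π₁ π₂ E ξ :=
    add_nonneg (mul_pos hγ₂0 hL1).le (mul_nonneg (mul_nonneg hγ₂0.le hπ₂) hL2)
  have hNx : 0 ≤ Nnum γ₁ γ₂ π₁ π₂ E ξ * ξ := mul_nonneg hN hξ0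
  have hkey : Dden γ₁ γ₂ π₁ π₂ E ξ - Nnum γ₁ γ₂ π₁ π₂ E ξ * ξ
      = (1 - ξ) * (γ₁ * L₁ γ₁ γ₂ π₁ π₂ E ξ + γ₁ * π₁ * L₂ γ₁ γ₂ ξ) := by
    simp only [Dden, Nnum, L₁, L₂]; ring
  have hle : Nnum γ₁ γ₂ π₁ π₂ E ξ * ξ ≤ Dden γ₁ γ₂ π₁ π₂ E ξ := by
    nlinarith [mul_nonneg (by linarith : (0:ℝ) ≤ 1 - ξ)
      (add_nonneg (mul_pos hγ₁0 hL1).le (mul_nonneg (mul_nonneg hγ₁0.le hπ₁) hL2))]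
  refine ⟨⟨hNx, hle⟩, ?_⟩
  rcases eq_or_lt_of_le (hNx.trans hle) with hD | hD
  · have : Nnum γ₁ γ₂ π₁ π₂ E ξ * ξ = 0 := le_antisymm (hle.trans_eq hD.symm) hNx
    rw [this]; simp
  · exact ⟨div_nonneg hNx hD.le, (div_le_one hD).mpr hle⟩
end

section
/- Let γ₁, γ₂ > 1, π₁, π₂ ≥ 0, and E be real numbers with L₁(0) > 0 and L₁(1) > 0, let θ be a real number, and let α̃ satisfy 0 ≤ α̃ ≤ 1 − θ. Then there exists ξ ∈ [0,1] such that f(ξ;α̃) = 0, where f(ξ;α̃) = ξ − α̃ − θ·N(ξ)·ξ/D(ξ). -/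
/-- Existence of a root of `f(·;α̃)` in `[0,1]` when `0 ≤ α̃ ≤ 1 − θ`. -/
theorem stmt_7 (γ₁ γ₂ π₁ π₂ E θ α' : ℝ) (hγ₁ : 1 < γ₁) (hγ₂ : 1 < γ₂)
    (hπ₁ : 0 ≤ π₁) (hπ₂ : 0 ≤ π₂)
    (h0 : 0 < L₁ γ₁ γ₂ π₁ π₂ E 0) (h1 : 0 < L₁ γ₁ γ₂ π₁ π₂ E 1)
    (hα₀ : 0 ≤ α') (hα₁ : α' ≤ 1 - θ) :
    ∃ ξ ∈ Set.Icc (0 : ℝ) 1, fCN γ₁ γ₂ π₁ π₂ E θ α' ξ = 0 := by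
  have hD : ∀ ξ ∈ Set.Icc (0:ℝ) 1, 0 < Dden γ₁ γ₂ π₁ π₂ E ξ := by
    intro ξ hξ
    obtain ⟨hξ0, hξ1⟩ := hξ
    have hL1 : 0 < L₁ γ₁ γ₂ π₁ π₂ E ξ := by
      have : L₁ γ₁ γ₂ π₁ π₂ E ξ
          = (1 - ξ) * L₁ γ₁ γ₂ π₁ π₂ E 0 + ξ * L₁ γ₁ γ₂ π₁ π₂ E 1 := by
        simp only [L₁]; ring
      rw [this]
      rcases eq_or_lt_of_le hξ1 with h | h
      · subst h; nlinarith
      · nlinarith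
    have hL2 : 0 < L₂ γ₁ γ₂ ξ := by
      have : L₂ γ₁ γ₂ ξ = (1 - ξ) * (γ₁ - 1) + ξ * (γ₂ - 1) := by simp only [L₂]; ring
      rw [this]
      rcases eq_or_lt_of_le hξ1 with h | h
      · subst h; nlinarith
      · nlinarith
    have hA : 0 < (γ₂ - γ₁) * ξ + γ₁ := by nlinarith
    have hB : 0 ≤ (γ₂ * π₂ - γ₁ * π₁) * ξ + γ₁ * π₁ := by
      nlinarith [mul_nonneg hξ0 (mul_nonneg (by linarith : (0:ℝ) ≤ γ₂) hπ₂),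
        mul_nonneg (by linarith : (0:ℝ) ≤ 1 - ξ) (mul_nonneg (by linarith : (0:ℝ) ≤ γ₁) hπ₁)]
    have := mul_pos hA hL1
    have := mul_nonneg hB hL2.le
    simp only [Dden]; nlinarith
  have hcont : ContinuousOn (fCN γ₁ γ₂ π₁ π₂ E θ α') (Set.Icc 0 1) := by
    unfold fCN Nnum Dden L₁ L₂
    apply ContinuousOn.sub (by fun_prop)
    apply ContinuousOn.div (by fun_prop) (by fun_prop)
    intro x hx
    have := hD x hx
    simp only [Dden, L₁, L₂] at this
    exact this.ne'
  have hf0 : fCN γ₁ γ₂ π₁ π₂ E θ α' 0 = -α' := by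
    simp [fCN]
  have hf1 : fCN γ₁ γ₂ π₁ π₂ E θ α' 1 = 1 - α' - θ := by
    have hND : Nnum γ₁ γ₂ π₁ π₂ E 1 = Dden γ₁ γ₂ π₁ π₂ E 1 := by
      simp only [Nnum, Dden, L₁, L₂]; ring
    have hD1 : Dden γ₁ γ₂ π₁ π₂ E 1 ≠ 0 := (hD 1 (by norm_num)).ne'
    simp only [fCN, hND, mul_one]
    rw [mul_div_assoc, div_self hD1, mul_one]
  have key := intermediate_value_Icc (by norm_num : (0:ℝ) ≤ 1) hcont
  have h0mem : (0:ℝ) ∈ Set.Icc (fCN γ₁ γ₂ π₁ π₂ E θ α' 0) (fCN γ₁ γ₂ π₁ π₂ E θ α' 1) := by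
    rw [hf0, hf1]; constructor <;> linarith
  obtain ⟨ξ, hξ, hfξ⟩ := key h0mem
  exact ⟨ξ, hξ, hfξ⟩
end

section
/- Let u, v, ρ, c be real numbers with ρ ≠ 0, and let A be the 5×5 real matrix with rows [u,0,0,0,0], [0,u,ρ,0,0], [0,0,u,0,1/ρ], [0,0,0,u,0], [0,0,ρc²,0,u]. Then the characteristic polynomial of A equals (X − u)³·((X − u)² − c²); in particular the eigenvalues of A are u−c, u (with algebraic multiplicity three), and u+c. -/
open Polynomial

/-- Characteristic polynomial of the x-direction coefficient matrix of the
quasi-linear Kapila system; the eigenvalues are `u−c`, `u` (multiplicity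
three), and `u+c`. -/
theorem stmt_13 (u v ρ c : ℝ) (hρ : ρ ≠ 0)
    (A : Matrix (Fin 5) (Fin 5) ℝ)
    (hA : A = !![u, 0, 0, 0, 0;
                 0, u, ρ, 0, 0;
                 0, 0, u, 0, 1/ρ;
                 0, 0, 0, u, 0;
                 0, 0, ρ * c ^ 2, 0, u]) :
    A.charpoly = (X - C u) ^ 3 * ((X - C u) ^ 2 - C (c ^ 2)) ∧
    A.charpoly.roots = {u - c, u, u, u, u + c} := by
  subst hA
  have hm : (!![u, 0, 0, 0, 0; 0, u, ρ, 0, 0; 0, 0, u, 0, 1/ρ; 0, 0, 0, u, 0;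
        0, 0, ρ * c ^ 2, 0, u] : Matrix (Fin 5) (Fin 5) ℝ).charmatrix =
      !![X - C u, 0, 0, 0, 0; 0, X - C u, -C ρ, 0, 0; 0, 0, X - C u, 0, -C (1/ρ);
         0, 0, 0, X - C u, 0; 0, 0, -C (ρ * c ^ 2), 0, X - C u] := by
    ext i j
    fin_cases i <;> fin_cases j <;>
      simp [Matrix.charmatrix_apply_eq, Matrix.charmatrix_apply_ne,
        Matrix.vecHead, Matrix.vecTail]
  have h2 : (C ρ⁻¹ : ℝ[X]) * C ρ = 1 := by
    rw [← C_mul, inv_mul_cancel₀ hρ, C_1]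
  have hcp : (!![u, 0, 0, 0, 0; 0, u, ρ, 0, 0; 0, 0, u, 0, 1/ρ; 0, 0, 0, u, 0;
        0, 0, ρ * c ^ 2, 0, u] : Matrix (Fin 5) (Fin 5) ℝ).charpoly
      = (X - C u) ^ 3 * ((X - C u) ^ 2 - C (c ^ 2)) := by
    rw [Matrix.charpoly, hm]
    simp [Matrix.det_succ_row_zero, Fin.sum_univ_succ]
    linear_combination (C c ^ 2 * (-(3 * X * C u ^ 2) + 3 * X ^ 2 * C u
      - X ^ 3 + C u ^ 3)) * h2
  refine ⟨hcp, ?_⟩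
  rw [hcp]
  have hfac : ((X - C u) ^ 2 - C (c ^ 2) : ℝ[X])
      = (X - C (u - c)) * (X - C (u + c)) := by
    simp only [C_sub, C_add, C_pow]
    ring
  rw [hfac]
  have hne : ((X - C u) ^ 3 : ℝ[X]) ≠ 0 := pow_ne_zero _ (X_sub_C_ne_zero u)
  rw [roots_mul (mul_ne_zero hne (mul_ne_zero (X_sub_C_ne_zero _) (X_sub_C_ne_zero _))),
    roots_mul (mul_ne_zero (X_sub_C_ne_zero _) (X_sub_C_ne_zero _)),
    roots_pow, roots_X_sub_C, roots_X_sub_C, roots_X_sub_C]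
  simp only [Multiset.insert_eq_cons, ← Multiset.singleton_add]
  abel
end
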